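/- arXiv:2404.18855 — 2 statements merged into one kernel-verified Lean document; each statement's English description precedes it below -/
import Mathlib

section
/- Let E be a subset of [0,1]. Then E is dense in [0,1] if and only if I_σ ∩ E ≠ ∅ for every strictly increasing finite sequence σ of positive integers (of any positive length). -/
open Filter Set Topology MeasureTheory
open scoped ENNReal NNReal

/-- The Pierce expansion map `T`. -/
noncomputable def pierceT (x : ℝ) : ℝ := if x = 0 then 0 else 1 - (⌊1 / x⌋₊ : ℝ) * x

/-- The first Pierce digit `d₁(x)`, with `d₁(0) = ∞`. -/
noncomputable def pierceD1 (x : ℝ) : ℕ∞ := if x = 0 then ⊤ else ((⌊1 / x⌋₊ : ℕ) : ℕ∞)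

/-- The `k`-th Pierce expansion digit `d_k(x)` (for `k ≥ 1`). -/
noncomputable def pierceDigit (k : ℕ) (x : ℝ) : ℕ∞ := pierceD1 (pierceT^[k - 1] x)

/-- Extended logarithm on `ℕ∞`, with the convention `log ∞ = ∞`. -/
noncomputable def enlog (m : ℕ∞) : ℝ≥0∞ :=
  if m = ⊤ then ⊤ else ENNReal.ofReal (Real.log ((WithTop.untopD 0 m : ℕ) : ℝ))

/-- `A(α) = {x ∈ [0,1] : lim (log d_n(x))/n = α}`. -/
noncomputable def pierceA (α : ℝ≥0∞) : Set ℝ :=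
  {x ∈ Icc (0 : ℝ) 1 |
    Tendsto (fun n : ℕ => enlog (pierceDigit n x) / (n : ℝ≥0∞)) atTop (𝓝 α)}

/-- The number of leap years up to year `N` with intercalation sequence `σ`:
`L(σ, N) = Σ_{k ≥ 1} (-1)^{k+1} ⌊N/(σ₁⋯σ_k)⌋`, with `⌊N/∞⌋ = 0`. -/
noncomputable def leapL (σ : ℕ → ℕ∞) (N : ℕ) : ℝ :=
  ∑' k : ℕ, (-1 : ℝ) ^ k *
    ((N / WithTop.untopD 0 (∏ i ∈ Finset.Icc 1 (k + 1), σ i) : ℕ) : ℝ)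

/-- The quotient `(Nx - L((d_k(x))_k, N))/√(log N)`. -/
noncomputable def leapQ (x : ℝ) (N : ℕ) : ℝ :=
  ((N : ℝ) * x - leapL (fun k => pierceDigit k x) N) / Real.sqrt (Real.log N)

/-- `S(α)`: the set of `x ∈ [0,1]` whose leap-year quotient has limsup `1/√(2α)`
and liminf `-1/√(2α)`. -/
noncomputable def pierceS (α : ℝ≥0∞) : Set ℝ :=
  {x ∈ Icc (0 : ℝ) 1 |
    Filter.limsup (fun N : ℕ => ((leapQ x N : ℝ) : EReal)) atTop
      = (((2 * α) ^ (-(1 / 2) : ℝ) : ℝ≥0∞) : EReal) ∧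
    Filter.liminf (fun N : ℕ => ((leapQ x N : ℝ) : EReal)) atTop
      = -(((2 * α) ^ (-(1 / 2) : ℝ) : ℝ≥0∞) : EReal)}

/-- The fundamental interval `I_σ` associated with the finite sequence `σ 1, …, σ n`. -/
def fundI (n : ℕ) (σ : ℕ → ℕ) : Set ℝ :=
  {x ∈ Icc (0 : ℝ) 1 | ∀ k, 1 ≤ k → k ≤ n → pierceDigit k x = ((σ k : ℕ) : ℕ∞)}

/-! Since `T x = 1 - σ₁ x` on `(1/(σ₁+1), 1/σ₁]`, the fundamental interval `I_σ` is the preimage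
of `I_{(σ₂,…,σₙ)}` under this affine map of slope `-σ₁`; by induction it is an interval, up to
endpoints, of length at most `1 / (σₙ + 1)`. Having nonempty interior, it meets every dense set.
Conversely, an irrational `x ∈ (0,1)` has strictly increasing finite digits, so it lies in the
fundamental interval of its first `n + 1` digits, of length at most `1 / (n + 1)`; a set meeting
every `I_σ` therefore accumulates at every irrational point of `(0,1)`. -/

section AffineInterval

variable {𝕜 : Type*} [Field 𝕜] [LinearOrder 𝕜] [IsStrictOrderedRing 𝕜] {c : 𝕜}

lemma preimage_const_sub_mul_Ioo (hc : 0 < c) (d a b : 𝕜) :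
    (fun x => d - c * x) ⁻¹' Ioo a b = Ioo ((d - b) / c) ((d - a) / c) := by
  change (c * ·) ⁻¹' ((d - ·) ⁻¹' Ioo a b) = _
  rw [preimage_const_sub_Ioo, preimage_const_mul_Ioo₀ _ _ hc]

lemma preimage_const_sub_mul_Icc (hc : 0 < c) (d a b : 𝕜) :
    (fun x => d - c * x) ⁻¹' Icc a b = Icc ((d - b) / c) ((d - a) / c) := by
  change (c * ·) ⁻¹' ((d - ·) ⁻¹' Icc a b) = _
  rw [preimage_const_sub_Icc, preimage_const_mul_Icc₀ _ _ hc]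

end AffineInterval

lemma Icc_subset_Icc_of_Ioo_subset {α : Type*} [TopologicalSpace α] [LinearOrder α]
    [OrderTopology α] [DenselyOrdered α] {a b l u : α} (hab : a < b) (h : Ioo a b ⊆ Icc l u) :
    Icc a b ⊆ Icc l u :=
  closure_Ioo hab.ne ▸ closure_minimal h isClosed_Icc

section FirstDigit

variable {x : ℝ} {A : ℕ}

lemma natFloor_one_div_eq_iff (hA : A ≠ 0) :
    ⌊1 / x⌋₊ = A ↔ x ∈ Ioc (1 / ((A : ℝ) + 1)) (1 / A) := by
  have hA0 : (0 : ℝ) < A := by positivity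
  rcases le_or_gt x 0 with hx | hx
  · rw [Nat.floor_of_nonpos (one_div_nonpos.2 hx)]
    exact iff_of_false (Ne.symm hA) fun h => by
      linarith [h.1, (by positivity : (0 : ℝ) < 1 / ((A : ℝ) + 1))]
  · rw [Nat.floor_eq_iff' hA, mem_Ioc, one_div_lt (by positivity) hx, le_one_div hA0 hx, and_comm]

lemma pierceD1_eq_natCast_iff (hA : A ≠ 0) :
    pierceD1 x = A ↔ x ∈ Ioc (1 / ((A : ℝ) + 1)) (1 / A) := by
  unfold pierceD1
  split_ifs with hx
  · subst hx
    exact iff_of_false (ENat.top_ne_natCast A) fun h => (h.1.trans' (by positivity)).false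
  · rw [Nat.cast_inj, natFloor_one_div_eq_iff hA]

lemma pierceT_eq_of_mem_Ioc (hA : A ≠ 0) (hx : x ∈ Ioc (1 / ((A : ℝ) + 1)) (1 / A)) :
    pierceT x = 1 - A * x := by
  have hx0 : x ≠ 0 := (hx.1.trans' (by positivity)).ne'
  rw [pierceT, if_neg hx0, (natFloor_one_div_eq_iff hA).2 hx]

lemma one_sub_mul_mem_Ico (hA : A ≠ 0) (hx : x ∈ Ioc (1 / ((A : ℝ) + 1)) (1 / A)) :
    1 - A * x ∈ Ico 0 (1 / ((A : ℝ) + 1)) := by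
  have hA0 : (0 : ℝ) < A := by positivity
  obtain ⟨hlo, hhi⟩ := hx
  rw [div_lt_iff₀ (by positivity)] at hlo
  rw [le_div_iff₀ hA0] at hhi
  constructor
  · linarith
  · rw [lt_div_iff₀ (by positivity)]
    nlinarith

lemma Ioc_one_div_subset_Icc (hA : A ≠ 0) : Ioc (1 / ((A : ℝ) + 1)) (1 / A) ⊆ Icc 0 1 :=
  Ioc_subset_Icc_self.trans <| Icc_subset_Icc (by positivity)
    (div_le_one_of_le₀ (by exact_mod_cast Nat.one_le_iff_ne_zero.2 hA) (Nat.cast_nonneg A))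

end FirstDigit

lemma pierceDigit_succ {k : ℕ} (hk : 1 ≤ k) (x : ℝ) :
    pierceDigit (k + 1) x = pierceDigit k (pierceT x) := by
  obtain ⟨j, rfl⟩ := Nat.exists_eq_add_of_le' hk
  simp only [pierceDigit, Nat.add_sub_cancel, Function.iterate_succ_apply]

def PierceAdmissible (n : ℕ) (σ : ℕ → ℕ) : Prop :=
  (∀ k, 1 ≤ k → k ≤ n → 0 < σ k) ∧ ∀ k, 1 ≤ k → k + 1 ≤ n → σ k < σ (k + 1)

lemma PierceAdmissible.tail {n : ℕ} {σ : ℕ → ℕ} (h : PierceAdmissible (n + 1) σ) :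
    PierceAdmissible n (fun k => σ (k + 1)) :=
  ⟨fun k hk hkn => h.1 (k + 1) (by omega) (by omega),
    fun k hk hkn => h.2 (k + 1) (by omega) (by omega)⟩

section FundamentalInterval

variable {n : ℕ} {σ : ℕ → ℕ}

lemma fundI_subset_Ioc (hn : 1 ≤ n) (hσ : σ 1 ≠ 0) :
    fundI n σ ⊆ Ioc (1 / ((σ 1 : ℝ) + 1)) (1 / σ 1) :=
  fun _ hx => (pierceD1_eq_natCast_iff hσ).1 (hx.2 1 le_rfl hn)

lemma fundI_one (hσ : σ 1 ≠ 0) : fundI 1 σ = Ioc (1 / ((σ 1 : ℝ) + 1)) (1 / σ 1) := by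
  refine (fundI_subset_Ioc le_rfl hσ).antisymm fun x hx => ⟨Ioc_one_div_subset_Icc hσ hx, ?_⟩
  intro k hk hk1
  obtain rfl : k = 1 := by omega
  exact (pierceD1_eq_natCast_iff hσ).2 hx

lemma fundI_succ (hn : 1 ≤ n) (hσ : σ 1 ≠ 0) :
    fundI (n + 1) σ = Ioc (1 / ((σ 1 : ℝ) + 1)) (1 / σ 1) ∩
      (fun x => 1 - σ 1 * x) ⁻¹' fundI n (fun k => σ (k + 1)) := by
  ext x
  constructor
  · rintro ⟨-, hd⟩
    have hI : x ∈ _ := (pierceD1_eq_natCast_iff hσ).1 (hd 1 le_rfl (by omega))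
    have hT := one_sub_mul_mem_Ico hσ hI
    refine ⟨hI, ⟨hT.1, hT.2.le.trans ?_⟩, fun k hk hkn => ?_⟩
    · exact div_le_one_of_le₀ (by simp) (by positivity)
    · show pierceDigit k (1 - σ 1 * x) = σ (k + 1)
      rw [← pierceT_eq_of_mem_Ioc hσ hI, ← pierceDigit_succ hk]
      exact hd (k + 1) (by omega) (by omega)
  · rintro ⟨hI, -, hd⟩
    refine ⟨Ioc_one_div_subset_Icc hσ hI, fun k hk hkn => ?_⟩
    rcases k with _ | _ | k
    · omega
    · exact (pierceD1_eq_natCast_iff hσ).2 hI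
    · rw [pierceDigit_succ (by omega), pierceT_eq_of_mem_Ioc hσ hI]
      exact hd (k + 1) (by omega) (by omega)

end FundamentalInterval

lemma exists_Ioo_subset_fundI_subset_Icc {n : ℕ} (hn : 1 ≤ n) {σ : ℕ → ℕ}
    (hσ : PierceAdmissible n σ) :
    ∃ a b : ℝ, a < b ∧ b - a ≤ 1 / ((σ n : ℝ) + 1) ∧ Ioo a b ⊆ fundI n σ ∧ fundI n σ ⊆ Icc a b := by
  induction n, hn using Nat.le_induction generalizing σ with
  | base =>
    have hA : 0 < σ 1 := hσ.1 1 le_rfl le_rfl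
    have hA' : (0 : ℝ) < σ 1 := by exact_mod_cast hA
    refine ⟨_, _, one_div_lt_one_div_of_lt hA' (lt_add_one _), ?_,
      (fundI_one hA.ne').symm ▸ Ioo_subset_Ioc_self, (fundI_one hA.ne').symm ▸ Ioc_subset_Icc_self⟩
    rw [div_sub_div _ _ hA'.ne' (by positivity), one_mul, mul_one, add_sub_cancel_left]
    exact div_le_div_of_nonneg_left zero_le_one (by positivity)
      (le_mul_of_one_le_left (by positivity) (by exact_mod_cast hA))
  | succ n hn ih =>
    have hA : 0 < σ 1 := hσ.1 1 le_rfl (by omega)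
    have hA' : (0 : ℝ) < σ 1 := by exact_mod_cast hA
    obtain ⟨a, b, hab, hlen, hIoo, hIcc⟩ := ih hσ.tail
    -- `(a, b)` lies in the first-digit interval of the tail, whose digit `σ 2` exceeds `σ 1`.
    have hbounds : Icc a b ⊆ Icc 0 (1 / ((σ 1 : ℝ) + 1)) := by
      refine Icc_subset_Icc_of_Ioo_subset hab <| hIoo.trans <|
        (fundI_subset_Ioc hn (hσ.tail.1 1 le_rfl hn).ne').trans <|
          Ioc_subset_Icc_self.trans <| Icc_subset_Icc (by positivity) ?_
      exact one_div_le_one_div_of_le (by positivity) (by exact_mod_cast hσ.2 1 le_rfl (by omega))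
    obtain ⟨ha0, -⟩ := hbounds (left_mem_Icc.2 hab.le)
    obtain ⟨-, hb⟩ := hbounds (right_mem_Icc.2 hab.le)
    refine ⟨(1 - b) / σ 1, (1 - a) / σ 1, by gcongr, ?_, ?_, ?_⟩
    · calc (1 - a) / σ 1 - (1 - b) / σ 1 = (b - a) / σ 1 := by ring
        _ ≤ b - a := div_le_self (by linarith) (by exact_mod_cast hA)
        _ ≤ 1 / ((σ (n + 1) : ℝ) + 1) := hlen
    · intro x hx
      rw [fundI_succ hn hA.ne']
      refine ⟨⟨?_, ?_⟩, hIoo ?_⟩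
      · calc 1 / ((σ 1 : ℝ) + 1) = (1 - 1 / ((σ 1 : ℝ) + 1)) / σ 1 := by field_simp; ring
          _ ≤ (1 - b) / σ 1 := by gcongr
          _ < x := hx.1
      · calc x ≤ (1 - a) / σ 1 := hx.2.le
          _ ≤ 1 / σ 1 := by gcongr; linarith
      · rwa [← preimage_const_sub_mul_Ioo hA'] at hx
    · rw [fundI_succ hn hA.ne', ← preimage_const_sub_mul_Icc hA']
      exact inter_subset_right.trans (preimage_mono hIcc)

lemma fundI_inter_nonempty_of_Icc_subset_closure {E : Set ℝ} (hE : Icc 0 1 ⊆ closure E)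
    {n : ℕ} (hn : 1 ≤ n) {σ : ℕ → ℕ} (hσ : PierceAdmissible n σ) : (fundI n σ ∩ E).Nonempty := by
  obtain ⟨a, b, hab, -, hIoo, -⟩ := exists_Ioo_subset_fundI_subset_Icc hn hσ
  obtain ⟨c, hc⟩ := exists_between hab
  obtain ⟨z, hz, hzE⟩ := mem_closure_iff.1 (hE (hIoo hc).1) _ isOpen_Ioo hc
  exact ⟨z, hIoo hz, hzE⟩

section IrrationalPoints

variable {x : ℝ}

lemma natFloor_one_div_ne_zero (hx0 : 0 < x) (hx1 : x ≤ 1) : ⌊1 / x⌋₊ ≠ 0 :=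
  (Nat.floor_pos.2 (one_le_one_div hx0 hx1)).ne'

lemma pierceT_mem_Ico (hx0 : 0 < x) (hx1 : x ≤ 1) :
    pierceT x ∈ Ico 0 (1 / ((⌊1 / x⌋₊ : ℝ) + 1)) := by
  have hA := natFloor_one_div_ne_zero hx0 hx1
  have hx := (natFloor_one_div_eq_iff hA).1 rfl
  rw [pierceT_eq_of_mem_Ioc hA hx]
  exact one_sub_mul_mem_Ico hA hx

lemma natFloor_one_div_lt_pierceT (hx0 : 0 < x) (hx1 : x ≤ 1) (hT : 0 < pierceT x) :
    ⌊1 / x⌋₊ < ⌊1 / pierceT x⌋₊ :=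
  Nat.le_floor <| by
    push_cast
    exact (le_one_div (by positivity) hT).2 (pierceT_mem_Ico hx0 hx1).2.le

lemma mapsTo_pierceT_irrational :
    MapsTo pierceT (Ioo 0 1 ∩ {x | Irrational x}) (Ioo 0 1 ∩ {x | Irrational x}) := by
  rintro x ⟨⟨hx0, hx1⟩, hirr⟩
  have hA := natFloor_one_div_ne_zero hx0 hx1.le
  have hirrT : Irrational (pierceT x) := by
    rw [pierceT_eq_of_mem_Ioc hA ((natFloor_one_div_eq_iff hA).1 rfl)]
    simpa using (hirr.natCast_mul hA).natCast_sub 1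
  obtain ⟨hT0, hT1⟩ := pierceT_mem_Ico hx0 hx1.le
  exact ⟨⟨hT0.lt_of_ne' hirrT.ne_zero, hT1.trans_le (div_le_one_of_le₀ (by simp) (by positivity))⟩,
    hirrT⟩

noncomputable def pierceDigitSeq (x : ℝ) (k : ℕ) : ℕ := ⌊1 / pierceT^[k - 1] x⌋₊

variable (hx : x ∈ Ioo 0 1 ∩ {x | Irrational x})
include hx

lemma pierceDigit_eq_pierceDigitSeq (k : ℕ) : pierceDigit k x = pierceDigitSeq x k := by
  rw [pierceDigit, pierceD1, if_neg (mapsTo_pierceT_irrational.iterate (k - 1) hx).1.1.ne']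
  rfl

lemma pierceDigitSeq_lt_succ {k : ℕ} (hk : 1 ≤ k) :
    pierceDigitSeq x k < pierceDigitSeq x (k + 1) := by
  obtain ⟨j, rfl⟩ := Nat.exists_eq_add_of_le' hk
  have hy := mapsTo_pierceT_irrational.iterate j hx
  simp only [pierceDigitSeq, Nat.add_sub_cancel, Function.iterate_succ_apply']
  exact natFloor_one_div_lt_pierceT hy.1.1 hy.1.2.le (mapsTo_pierceT_irrational hy).1.1

lemma pierceAdmissible_pierceDigitSeq (n : ℕ) : PierceAdmissible n (pierceDigitSeq x) := by
  refine ⟨fun k _ _ => Nat.pos_of_ne_zero ?_, fun k hk _ => pierceDigitSeq_lt_succ hx hk⟩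
  have hy := mapsTo_pierceT_irrational.iterate (k - 1) hx
  exact natFloor_one_div_ne_zero hy.1.1 hy.1.2.le

lemma le_pierceDigitSeq_succ (n : ℕ) : n ≤ pierceDigitSeq x (n + 1) :=
  StrictMono.id_le (f := fun n => pierceDigitSeq x (n + 1))
    (strictMono_nat_of_lt_succ fun n => pierceDigitSeq_lt_succ hx (by omega)) n

lemma mem_fundI_pierceDigitSeq (n : ℕ) : x ∈ fundI n (pierceDigitSeq x) :=
  ⟨Ioo_subset_Icc_self hx.1, fun k _ _ => pierceDigit_eq_pierceDigitSeq hx k⟩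

lemma mem_closure_of_forall_fundI_inter_nonempty {E : Set ℝ}
    (h : ∀ n σ, 1 ≤ n → PierceAdmissible n σ → (fundI n σ ∩ E).Nonempty) : x ∈ closure E := by
  rw [Metric.mem_closure_iff]
  intro ε hε
  obtain ⟨m, hm⟩ := exists_nat_one_div_lt hε
  have hσ := pierceAdmissible_pierceDigitSeq hx (m + 1)
  obtain ⟨a, b, -, hlen, -, hIcc⟩ := exists_Ioo_subset_fundI_subset_Icc (Nat.le_add_left 1 m) hσ
  obtain ⟨e, heI, heE⟩ := h (m + 1) _ (Nat.le_add_left 1 m) hσ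
  refine ⟨e, heE, ?_⟩
  calc dist x e ≤ b - a := Real.dist_le_of_mem_Icc (hIcc (mem_fundI_pierceDigitSeq hx _)) (hIcc heI)
    _ ≤ 1 / ((pierceDigitSeq x (m + 1) : ℝ) + 1) := hlen
    _ ≤ 1 / ((m : ℝ) + 1) := by gcongr; exact_mod_cast le_pierceDigitSeq_succ hx m
    _ < ε := hm

end IrrationalPoints

theorem stmt10_general (E : Set ℝ) :
    Set.Icc (0 : ℝ) 1 ⊆ closure E ↔
      ∀ (n : ℕ) (σ : ℕ → ℕ), 1 ≤ n →
        (∀ k, 1 ≤ k → k ≤ n → 0 < σ k) →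
        (∀ k, 1 ≤ k → k + 1 ≤ n → σ k < σ (k + 1)) →
        (fundI n σ ∩ E).Nonempty := by
  refine ⟨fun hE n σ hn hpos hinc => fundI_inter_nonempty_of_Icc_subset_closure hE hn ⟨hpos, hinc⟩,
    fun h => ?_⟩
  have hE : Ioo 0 1 ∩ {x | Irrational x} ⊆ closure E := fun x hx =>
    mem_closure_of_forall_fundI_inter_nonempty hx fun n σ hn hσ => h n σ hn hσ.1 hσ.2
  calc Icc (0 : ℝ) 1 = closure (Ioo 0 1) := (closure_Ioo zero_ne_one).symm
    _ ⊆ closure (Ioo 0 1 ∩ {x | Irrational x}) :=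
      closure_minimal (dense_irrational.open_subset_closure_inter isOpen_Ioo) isClosed_closure
    _ ⊆ closure E := closure_minimal hE isClosed_closure

theorem stmt10 (E : Set ℝ) (hE : E ⊆ Set.Icc 0 1) :
    Set.Icc (0 : ℝ) 1 ⊆ closure E ↔
      ∀ (n : ℕ) (σ : ℕ → ℕ), 1 ≤ n →
        (∀ k, 1 ≤ k → k ≤ n → 0 < σ k) →
        (∀ k, 1 ≤ k → k + 1 ≤ n → σ k < σ (k + 1)) →
        (fundI n σ ∩ E).Nonempty :=
  stmt10_general E
end

section
/- Let E be a subset of [0,1]. The following are equivalent: (i) the Hausdorff dimension of I_σ ∩ E equals the Hausdorff dimension of E for every strictly increasing finite sequence σ of positive integers (of any positive length); (ii) the Hausdorff dimension of U ∩ E equals the Hausdorff dimension of E for every non-empty open subset U of [0,1] (with its subspace topology from ℝ). -/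
/-!
Since `dimH (· ∩ E)` is monotone and bounded by `dimH E`, it suffices that every fundamental
interval contains a non-empty relatively open subset of `[0,1]` and vice versa. On `I_σ` the map
`T` is affine with slope `-σ₁` and sends `I_σ` into `I_{(σ₂, …, σₙ)}`. Pulling an open interval back
along the inverse branch `t ↦ (1 - t)/σ₁` produces an open interval inside `I_σ`; conversely the
bound `diam I_σ ≤ 1/(σ₁⋯σₙ)` shows that the fundamental intervals around an irrational point,
whose digit sequence is infinite and strictly increasing, shrink to that point.
-/

open Filter Set Topology MeasureTheory
open scoped ENNReal NNReal

lemma fundI_zero (σ : ℕ → ℕ) : fundI 0 σ = Icc 0 1 := by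
  ext x
  simp only [fundI, mem_ofPred_eq, and_iff_left_iff_imp]
  intro _ k hk hk0
  omega

lemma pierceD1_eq_natCast_iff_s11 {x : ℝ} {m : ℕ} : pierceD1 x = m ↔ x ≠ 0 ∧ ⌊1 / x⌋₊ = m := by
  unfold pierceD1
  split_ifs with hx <;> simp [hx]

lemma pierceT_of_pierceD1_eq {x : ℝ} {m : ℕ} (h : pierceD1 x = m) : pierceT x = 1 - m * x := by
  obtain ⟨hx, hm⟩ := pierceD1_eq_natCast_iff_s11.1 h
  rw [pierceT, if_neg hx, hm]

lemma floor_one_div_mul_le_one {x : ℝ} (hx : 0 < x) : (⌊1 / x⌋₊ : ℝ) * x ≤ 1 :=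
  (le_div_iff₀ hx).1 (Nat.floor_le (by positivity))

lemma floor_one_div_pos {x : ℝ} (h₀ : 0 < x) (h₁ : x ≤ 1) : 0 < ⌊1 / x⌋₊ :=
  Nat.floor_pos.2 (by rwa [le_div_iff₀ h₀, one_mul])

lemma floor_one_div_eq {x : ℝ} {d : ℕ} (hx : 0 < x) (h₁ : d * x ≤ 1) (h₂ : 1 < (d + 1) * x) :
    ⌊1 / x⌋₊ = d := by
  rw [Nat.floor_eq_iff (by positivity), le_div_iff₀ hx, div_lt_iff₀ hx]
  exact ⟨h₁, h₂⟩

lemma pierceT_mem_Icc {x : ℝ} (hx : x ∈ Icc 0 1) : pierceT x ∈ Icc 0 1 := by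
  rcases eq_or_lt_of_le hx.1 with rfl | hx₀
  · simp [pierceT]
  have hd : (1 : ℝ) ≤ ⌊1 / x⌋₊ := Nat.one_le_cast.2 (floor_one_div_pos hx₀ hx.2)
  have := floor_one_div_mul_le_one hx₀
  rw [pierceT, if_neg hx₀.ne']
  constructor <;> nlinarith

lemma floor_one_div_lt_floor_one_div_pierceT {x : ℝ} (hx : 0 < x) (hT : 0 < pierceT x) :
    ⌊1 / x⌋₊ < ⌊1 / pierceT x⌋₊ := by
  set d := ⌊1 / x⌋₊
  have hd : 1 < ((d : ℝ) + 1) * x := (div_lt_iff₀ hx).1 (Nat.lt_floor_add_one _)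
  have hT' : pierceT x = 1 - d * x := by rw [pierceT, if_neg hx.ne']
  -- `x > 1/(d+1)` forces `T x = 1 - d x < 1/(d+1)`.
  refine Nat.lt_of_lt_of_le (Nat.lt_succ_self d) (Nat.le_floor ?_)
  rw [Nat.cast_succ, le_div_iff₀ hT, hT']
  nlinarith [Nat.cast_nonneg (α := ℝ) d]

lemma irrational_pierceT {x : ℝ} (hx : Irrational x) (h₀ : 0 < x) (h₁ : x < 1) :
    Irrational (pierceT x) := by
  rw [pierceT, if_neg h₀.ne']
  exact_mod_cast (hx.natCast_mul (floor_one_div_pos h₀ h₁.le).ne').natCast_sub 1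

lemma Irrational.pierceT_iterate {x : ℝ} (hx : Irrational x) (h : x ∈ Ioo 0 1) (k : ℕ) :
    Irrational (pierceT^[k] x) ∧ pierceT^[k] x ∈ Ioo 0 1 := by
  induction k with
  | zero => exact ⟨hx, h⟩
  | succ k ih =>
    obtain ⟨hirr, hy⟩ := ih
    rw [Function.iterate_succ_apply']
    have hT := irrational_pierceT hirr hy.1 hy.2
    obtain ⟨hT₀, hT₁⟩ := pierceT_mem_Icc (Ioo_subset_Icc_self hy)
    exact ⟨hT, hT₀.lt_of_ne hT.ne_zero.symm, hT₁.lt_of_ne hT.ne_one⟩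

lemma strictMono_floor_one_div_pierceT_iterate {x : ℝ} (hx : Irrational x) (h : x ∈ Ioo 0 1) :
    StrictMono fun k => ⌊1 / pierceT^[k] x⌋₊ := by
  refine strictMono_nat_of_lt_succ fun k => ?_
  have hT := (hx.pierceT_iterate h (k + 1)).2.1
  rw [Function.iterate_succ_apply'] at hT ⊢
  exact floor_one_div_lt_floor_one_div_pierceT (hx.pierceT_iterate h k).2.1 hT

lemma Irrational.mem_fundI {x : ℝ} (hx : Irrational x) (h : x ∈ Ioo 0 1) (n : ℕ) :
    x ∈ fundI n fun k => ⌊1 / pierceT^[k - 1] x⌋₊ :=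
  ⟨Ioo_subset_Icc_self h, fun k _ _ =>
    pierceD1_eq_natCast_iff_s11.2 ⟨(hx.pierceT_iterate h (k - 1)).2.1.ne', rfl⟩⟩

lemma le_prod_range_of_strictMono {τ : ℕ → ℕ} (hτ : StrictMono τ) (h₀ : 0 < τ 0) (n : ℕ) :
    n ≤ ∏ k ∈ Finset.range n, τ k :=
  calc n ≤ n.factorial := Nat.self_le_factorial n
    _ = ∏ k ∈ Finset.range n, (k + 1) := (Finset.prod_range_add_one_eq_factorial n).symm
    _ ≤ ∏ k ∈ Finset.range n, τ k := Finset.prod_le_prod' fun k _ => by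
      have := hτ.add_le_nat k 0
      rw [add_zero] at this
      omega

lemma mem_fundI_succ {n : ℕ} {σ : ℕ → ℕ} {x : ℝ} :
    x ∈ fundI (n + 1) σ ↔
      x ∈ Icc 0 1 ∧ pierceD1 x = σ 1 ∧ pierceT x ∈ fundI n fun k => σ (k + 1) := by
  constructor
  · rintro ⟨hx, hdig⟩
    refine ⟨hx, hdig 1 le_rfl (by omega), pierceT_mem_Icc hx, fun k hk hkn => ?_⟩
    obtain ⟨m, rfl⟩ := Nat.exists_eq_add_of_le' hk
    exact hdig (m + 2) (by omega) (by omega)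
  · rintro ⟨hx, hd, -, hdig⟩
    refine ⟨hx, fun k hk hkn => ?_⟩
    match k, hk with
    | 1, _ => exact hd
    | m + 2, _ => exact hdig (m + 1) (by omega) (by omega)

lemma dist_mul_prod_le_one_of_mem_fundI {n : ℕ} {σ : ℕ → ℕ} {x y : ℝ}
    (hx : x ∈ fundI n σ) (hy : y ∈ fundI n σ) :
    dist x y * ∏ k ∈ Finset.range n, (σ (k + 1) : ℝ) ≤ 1 := by
  induction n generalizing σ x y with
  | zero =>
    rw [fundI_zero] at hx hy
    simpa using Real.dist_le_of_mem_Icc_01 hx hy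
  | succ n ih =>
    obtain ⟨-, hx₁, hTx⟩ := mem_fundI_succ.1 hx
    obtain ⟨-, hy₁, hTy⟩ := mem_fundI_succ.1 hy
    have hdist : dist (pierceT x) (pierceT y) = σ 1 * dist x y := by
      rw [pierceT_of_pierceD1_eq hx₁, pierceT_of_pierceD1_eq hy₁, Real.dist_eq, Real.dist_eq,
        show 1 - (σ 1 : ℝ) * x - (1 - σ 1 * y) = σ 1 * (y - x) by ring, abs_mul, Nat.abs_cast,
        abs_sub_comm]
    calc dist x y * ∏ k ∈ Finset.range (n + 1), (σ (k + 1) : ℝ)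
        = dist (pierceT x) (pierceT y) * ∏ k ∈ Finset.range n, (σ (k + 1 + 1) : ℝ) := by
          rw [Finset.prod_range_succ', hdist]; ring
      _ ≤ 1 := ih hTx hTy

lemma exists_fundI_subset_of_isOpen {U : Set ℝ} (hU : U.Nonempty)
    (hUo : ∃ V : Set ℝ, IsOpen V ∧ U = V ∩ Icc 0 1) :
    ∃ (n : ℕ) (σ : ℕ → ℕ), 1 ≤ n ∧ (∀ k, 1 ≤ k → k ≤ n → 0 < σ k) ∧
      (∀ k, 1 ≤ k → k + 1 ≤ n → σ k < σ (k + 1)) ∧ fundI n σ ⊆ U := by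
  obtain ⟨V, hV, rfl⟩ := hUo
  have hV₀₁ : (V ∩ Ioo 0 1).Nonempty := by
    rw [← closure_nonempty_iff]
    refine hU.mono (subset_trans ?_ (hV.inter_closure (t := Ioo (0 : ℝ) 1)))
    rw [closure_Ioo zero_ne_one]
  obtain ⟨x, hx, hxV, hx₀₁⟩ := dense_irrational.exists_mem_open (hV.inter isOpen_Ioo) hV₀₁
  obtain ⟨ε, hε, hball⟩ := Metric.isOpen_iff.1 hV x hxV
  obtain ⟨n, hn⟩ := exists_nat_gt (1 / ε)
  have hn₀ : (0 : ℝ) < n := (one_div_pos.2 hε).trans hn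
  have hτ := strictMono_floor_one_div_pierceT_iterate hx hx₀₁
  have hτ₀ : 0 < ⌊1 / x⌋₊ := floor_one_div_pos hx₀₁.1 hx₀₁.2.le
  refine ⟨n, fun k => ⌊1 / pierceT^[k - 1] x⌋₊, Nat.one_le_iff_ne_zero.2 ?_, fun k hk _ => ?_,
    fun k hk _ => ?_, fun y hy => ⟨hball ?_, hy.1⟩⟩
  · rintro rfl
    simp at hn₀
  · exact hτ₀.trans_le (hτ.monotone (Nat.zero_le _))
  · exact hτ (by omega : k - 1 < k + 1 - 1)
  · have hprod : (n : ℝ) ≤ ∏ k ∈ Finset.range n, (⌊1 / pierceT^[k + 1 - 1] x⌋₊ : ℝ) := by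
      exact_mod_cast le_prod_range_of_strictMono hτ hτ₀ n
    have hdist := dist_mul_prod_le_one_of_mem_fundI hy (hx.mem_fundI hx₀₁ n)
    rw [Metric.mem_ball]
    rw [div_lt_iff₀ hε] at hn
    nlinarith [dist_nonneg (x := y) (y := x)]

lemma exists_Ioo_subset_fundI_succ {n : ℕ} {σ : ℕ → ℕ} {a b : ℝ} (hσ : 0 < σ 1) (ha : 0 ≤ a)
    (hab : a < b) (hb : b ≤ 1 / (σ 1 + 1)) (h : Ioo a b ⊆ fundI n fun k => σ (k + 1)) :
    ∃ a' b' : ℝ, 0 ≤ a' ∧ a' < b' ∧ b' ≤ 1 / σ 1 ∧ Ioo a' b' ⊆ fundI (n + 1) σ := by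
  have hd₁ : (1 : ℝ) ≤ σ 1 := Nat.one_le_cast.2 hσ
  have hd : (0 : ℝ) < σ 1 := by linarith
  have hb' : b * (σ 1 + 1) ≤ 1 := (le_div_iff₀ (by positivity)).1 hb
  -- the inverse branch `t ↦ (1 - t)/σ₁` of `T` maps `(a, b)` onto `((1 - b)/σ₁, (1 - a)/σ₁)`
  refine ⟨(1 - b) / σ 1, (1 - a) / σ 1, div_nonneg (by nlinarith) hd.le,
    div_lt_div_of_pos_right (by linarith) hd, div_le_div_of_nonneg_right (by linarith) hd.le,
    fun x ⟨hxa, hxb⟩ => ?_⟩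
  rw [div_lt_iff₀ hd] at hxa
  rw [lt_div_iff₀ hd] at hxb
  have hx : 0 < x := by nlinarith
  have hfloor : ⌊1 / x⌋₊ = σ 1 := floor_one_div_eq hx (by linarith) (by nlinarith)
  have hD1 : pierceD1 x = σ 1 := pierceD1_eq_natCast_iff_s11.2 ⟨hx.ne', hfloor⟩
  refine mem_fundI_succ.2 ⟨⟨hx.le, ?_⟩, hD1, h ?_⟩
  · nlinarith
  · rw [pierceT_of_pierceD1_eq hD1]
    constructor <;> linarith

lemma exists_Ioo_subset_fundI (n : ℕ) (σ : ℕ → ℕ) (hpos : ∀ k, 1 ≤ k → k ≤ n + 1 → 0 < σ k)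
    (hinc : ∀ k, 1 ≤ k → k + 1 ≤ n + 1 → σ k < σ (k + 1)) :
    ∃ a b : ℝ, 0 ≤ a ∧ a < b ∧ b ≤ 1 / σ 1 ∧ Ioo a b ⊆ fundI (n + 1) σ := by
  induction n generalizing σ with
  | zero =>
    refine exists_Ioo_subset_fundI_succ (hpos 1 le_rfl le_rfl) le_rfl (by positivity) le_rfl ?_
    rw [fundI_zero]
    exact Ioo_subset_Icc_self.trans
      (Icc_subset_Icc le_rfl (div_le_one_of_le₀ (by simp) (by positivity)))
  | succ n ih =>
    obtain ⟨a, b, ha, hab, hb, hsub⟩ := ih (fun k => σ (k + 1))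
      (fun k hk hkn => hpos (k + 1) (by omega) (by omega))
      (fun k hk hkn => hinc (k + 1) (by omega) (by omega))
    have h₁₂ : (σ 1 : ℝ) + 1 ≤ σ 2 := by exact_mod_cast hinc 1 le_rfl (by omega)
    refine exists_Ioo_subset_fundI_succ (hpos 1 le_rfl (by omega)) ha hab
      (hb.trans (one_div_le_one_div_of_le (by positivity) h₁₂)) hsub

lemma exists_isOpen_subset_fundI {n : ℕ} {σ : ℕ → ℕ} (hn : 1 ≤ n)
    (hpos : ∀ k, 1 ≤ k → k ≤ n → 0 < σ k) (hinc : ∀ k, 1 ≤ k → k + 1 ≤ n → σ k < σ (k + 1)) :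
    ∃ U : Set ℝ, U.Nonempty ∧ (∃ V : Set ℝ, IsOpen V ∧ U = V ∩ Icc 0 1) ∧ U ⊆ fundI n σ := by
  obtain ⟨m, rfl⟩ := Nat.exists_eq_add_of_le' hn
  obtain ⟨a, b, ha, hab, hb, hsub⟩ := exists_Ioo_subset_fundI m σ hpos hinc
  have hb₁ : b ≤ 1 :=
    hb.trans (div_le_one_of_le₀ (Nat.one_le_cast (α := ℝ).2 (hpos 1 le_rfl hn)) (by simp))
  exact ⟨Ioo a b, nonempty_Ioo.2 hab, ⟨Ioo a b, isOpen_Ioo,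
    (inter_eq_left.2 (Ioo_subset_Icc_self.trans (Icc_subset_Icc ha hb₁))).symm⟩, hsub⟩

lemma dimH_inter_eq_of_subset {X : Type*} [EMetricSpace X] {s t E : Set X} (hst : s ⊆ t)
    (hs : dimH (s ∩ E) = dimH E) : dimH (t ∩ E) = dimH E :=
  le_antisymm (dimH_mono inter_subset_right) (hs ▸ dimH_mono (inter_subset_inter_left E hst))

theorem stmt11_general (E : Set ℝ) :
    (∀ (n : ℕ) (σ : ℕ → ℕ), 1 ≤ n →
        (∀ k, 1 ≤ k → k ≤ n → 0 < σ k) →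
        (∀ k, 1 ≤ k → k + 1 ≤ n → σ k < σ (k + 1)) →
        dimH (fundI n σ ∩ E) = dimH E) ↔
      (∀ U : Set ℝ, U.Nonempty → (∃ V : Set ℝ, IsOpen V ∧ U = V ∩ Set.Icc 0 1) →
        dimH (U ∩ E) = dimH E) := by
  constructor
  · intro h U hU hUo
    obtain ⟨n, σ, hn, hpos, hinc, hsub⟩ := exists_fundI_subset_of_isOpen hU hUo
    exact dimH_inter_eq_of_subset hsub (h n σ hn hpos hinc)
  · intro h n σ hn hpos hinc
    obtain ⟨U, hU, hUo, hsub⟩ := exists_isOpen_subset_fundI hn hpos hinc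
    exact dimH_inter_eq_of_subset hsub (h U hU hUo)

theorem stmt11 (E : Set ℝ) (hE : E ⊆ Set.Icc 0 1) :
    (∀ (n : ℕ) (σ : ℕ → ℕ), 1 ≤ n →
        (∀ k, 1 ≤ k → k ≤ n → 0 < σ k) →
        (∀ k, 1 ≤ k → k + 1 ≤ n → σ k < σ (k + 1)) →
        dimH (fundI n σ ∩ E) = dimH E) ↔
      (∀ U : Set ℝ, U.Nonempty → (∃ V : Set ℝ, IsOpen V ∧ U = V ∩ Set.Icc 0 1) →
        dimH (U ∩ E) = dimH E) :=
  stmt11_general E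
end
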